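/- Conservation laws from the particle relabelling symmetry: let x, y : ℝ³ → ℝ be smooth functions of (a¹, a², t) with J = x_{,1}y_{,2} − x_{,2}y_{,1} nowhere zero, h = 1/J, f, g ∈ ℝ, and suppose the shallow water equations hold at every point: −ẍ + fẏ − g·∂h/∂x = 0 and −ÿ − fẋ − g·∂h/∂y = 0. With ν¹ = ẋx_{,1} + ẏy_{,1} + f·x·y_{,1}, ν² = ẋx_{,2} + ẏy_{,2} + f·x·y_{,2}, ν³ = −½(ẋ² + ẏ²) − f·x·ẏ + g·h, the conservation laws ν̇¹ + ν³_{,1} = 0 and ν̇² + ν³_{,2} = 0 hold at every point. -/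

import Mathlib

noncomputable section

/-- Partial derivative with respect to the label `a¹`. -/
def d1 (F : ℝ × ℝ × ℝ → ℝ) (p : ℝ × ℝ × ℝ) : ℝ := fderiv ℝ F p (1, 0, 0)

/-- Partial derivative with respect to the label `a²`. -/
def d2 (F : ℝ × ℝ × ℝ → ℝ) (p : ℝ × ℝ × ℝ) : ℝ := fderiv ℝ F p (0, 1, 0)

/-- Partial derivative with respect to time `t` (overdot). -/
def dt (F : ℝ × ℝ × ℝ → ℝ) (p : ℝ × ℝ × ℝ) : ℝ := fderiv ℝ F p (0, 0, 1)

/-- The Jacobian `J = x_{,1}y_{,2} − x_{,2}y_{,1}`. -/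
def Jac (x y : ℝ × ℝ × ℝ → ℝ) (p : ℝ × ℝ × ℝ) : ℝ :=
  d1 x p * d2 y p - d2 x p * d1 y p

/-- The fluid depth `h = 1/J`. -/
def dep (x y : ℝ × ℝ × ℝ → ℝ) : ℝ × ℝ × ℝ → ℝ := fun p => 1 / Jac x y p

/-- The Eulerian derivative `∂F/∂x = h(y_{,2}F_{,1} − y_{,1}F_{,2})`. -/
def Dex (x y F : ℝ × ℝ × ℝ → ℝ) (p : ℝ × ℝ × ℝ) : ℝ :=
  dep x y p * (d2 y p * d1 F p - d1 y p * d2 F p)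

/-- The Eulerian derivative `∂F/∂y = h(−x_{,2}F_{,1} + x_{,1}F_{,2})`. -/
def Dey (x y F : ℝ × ℝ × ℝ → ℝ) (p : ℝ × ℝ × ℝ) : ℝ :=
  dep x y p * (-(d2 x p) * d1 F p + d1 x p * d2 F p)

/-- Euler–Lagrange expression `E_x = −ẍ + fẏ − g·∂h/∂x` of Salmon's shallow water Lagrangian. -/
def SWEx (x y : ℝ × ℝ × ℝ → ℝ) (f g : ℝ) (p : ℝ × ℝ × ℝ) : ℝ :=
  -(dt (fun q => dt x q) p) + f * dt y p - g * Dex x y (dep x y) p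

/-- Euler–Lagrange expression `E_y = −ÿ − fẋ − g·∂h/∂y` of Salmon's shallow water Lagrangian. -/
def SWEy (x y : ℝ × ℝ × ℝ → ℝ) (f g : ℝ) (p : ℝ × ℝ × ℝ) : ℝ :=
  -(dt (fun q => dt y q) p) - f * dt x p - g * Dey x y (dep x y) p

/-- Lagrange multiplier `ν¹ = ẋx_{,1} + ẏy_{,1} + f·x·y_{,1}`. -/
def nu1 (x y : ℝ × ℝ × ℝ → ℝ) (f : ℝ) : ℝ × ℝ × ℝ → ℝ :=
  fun p => dt x p * d1 x p + dt y p * d1 y p + f * x p * d1 y p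

/-- Lagrange multiplier `ν² = ẋx_{,2} + ẏy_{,2} + f·x·y_{,2}`. -/
def nu2 (x y : ℝ × ℝ × ℝ → ℝ) (f : ℝ) : ℝ × ℝ × ℝ → ℝ :=
  fun p => dt x p * d2 x p + dt y p * d2 y p + f * x p * d2 y p

/-- Lagrange multiplier `ν³ = −½(ẋ² + ẏ²) − f·x·ẏ + g·h`. -/
def nu3 (x y : ℝ × ℝ × ℝ → ℝ) (f g : ℝ) : ℝ × ℝ × ℝ → ℝ :=
  fun p => -(1 / 2 : ℝ) * ((dt x p) ^ 2 + (dt y p) ^ 2) - f * x p * dt y p + g * dep x y p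

/-!
The conserved quantities come from Noether's theorem for the relabelling symmetry `a ↦ a + ε w`.
Differentiating `νʷ = ẋ x_{,w} + ẏ y_{,w} + f x y_{,w}` in time and `ν³` along `w`, the terms
`ẋ ẋ_{,w}`, `ẏ ẏ_{,w}` and `f x ẏ_{,w}` cancel by the symmetry of mixed partials, leaving
`(ẍ - f ẏ) x_{,w} + (ÿ + f ẋ) y_{,w} + g h_{,w}`. On solutions this is
`g (h_{,w} - h_x x_{,w} - h_y y_{,w})`, which vanishes by the chain rule for the Eulerian derivatives.
-/

section DirectionalDerivative

variable {E : Type*} [NormedAddCommGroup E] [NormedSpace ℝ E]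

theorem ContDiff.differentiable_fderiv_apply {F : E → ℝ} (hF : ContDiff ℝ 2 F) (v : E) :
    Differentiable ℝ (fun q => fderiv ℝ F q v) :=
  ((hF.fderiv_right (m := 1) (by norm_num)).differentiable (by norm_num)).clm_apply
    (differentiable_const v)

theorem ContDiff.fderiv_fderiv_apply_comm {F : E → ℝ} (hF : ContDiff ℝ 2 F) (p v w : E) :
    fderiv ℝ (fun q => fderiv ℝ F q w) p v = fderiv ℝ (fun q => fderiv ℝ F q v) p w := by
  have hF' : Differentiable ℝ (fderiv ℝ F) :=
    (hF.fderiv_right (m := 1) (by norm_num)).differentiable (by norm_num)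
  simpa [fderiv_clm_apply (hF' p) (differentiableAt_const _)] using
    (hF.contDiffAt.isSymmSndFDerivAt (by simp)).eq v w

theorem relabelling_noether_identity {X Y H : E → ℝ} {p : E} (hX : ContDiff ℝ 2 X)
    (hY : ContDiff ℝ 2 Y) (hH : DifferentiableAt ℝ H p) (f g : ℝ) (u w : E) :
    fderiv ℝ (fun q => fderiv ℝ X q u * fderiv ℝ X q w + fderiv ℝ Y q u * fderiv ℝ Y q w
        + f * X q * fderiv ℝ Y q w) p u
      + fderiv ℝ (fun q => -(1 / 2 : ℝ) * (fderiv ℝ X q u ^ 2 + fderiv ℝ Y q u ^ 2)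
        - f * X q * fderiv ℝ Y q u + g * H q) p w
    = (fderiv ℝ (fun q => fderiv ℝ X q u) p u - f * fderiv ℝ Y p u) * fderiv ℝ X p w
      + (fderiv ℝ (fun q => fderiv ℝ Y q u) p u + f * fderiv ℝ X p u) * fderiv ℝ Y p w
      + g * fderiv ℝ H p w := by
  have hXd := hX.differentiable (by norm_num)
  have hXu := hX.differentiable_fderiv_apply
  have hYu := hY.differentiable_fderiv_apply
  simp (disch := fun_prop) only [fderiv_fun_add, fderiv_fun_sub, fderiv_fun_mul, fderiv_fun_pow,
    fderiv_const_apply, add_apply, sub_apply, smul_apply, zero_apply, smul_eq_mul, mul_zero,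
    add_zero]
  rw [hX.fderiv_fderiv_apply_comm p u w, hY.fderiv_fderiv_apply_comm p u w]
  ring

theorem relabelling_conservation_law {X Y H : E → ℝ} {p : E} (hX : ContDiff ℝ 2 X)
    (hY : ContDiff ℝ 2 Y) (hH : DifferentiableAt ℝ H p) {f g A B : ℝ} {u w : E}
    (hXuu : fderiv ℝ (fun q => fderiv ℝ X q u) p u - f * fderiv ℝ Y p u = -(g * A))
    (hYuu : fderiv ℝ (fun q => fderiv ℝ Y q u) p u + f * fderiv ℝ X p u = -(g * B))
    (hHw : fderiv ℝ H p w = A * fderiv ℝ X p w + B * fderiv ℝ Y p w) :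
    fderiv ℝ (fun q => fderiv ℝ X q u * fderiv ℝ X q w + fderiv ℝ Y q u * fderiv ℝ Y q w
        + f * X q * fderiv ℝ Y q w) p u
      + fderiv ℝ (fun q => -(1 / 2 : ℝ) * (fderiv ℝ X q u ^ 2 + fderiv ℝ Y q u ^ 2)
        - f * X q * fderiv ℝ Y q u + g * H q) p w = 0 := by
  rw [relabelling_noether_identity hX hY hH, hXuu, hYuu, hHw]
  ring

end DirectionalDerivative

section ShallowWater

variable {x y : ℝ × ℝ × ℝ → ℝ} {p : ℝ × ℝ × ℝ}

theorem d1_eq_Dex_mul_add_Dey_mul (hJ : Jac x y p ≠ 0) (F : ℝ × ℝ × ℝ → ℝ) :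
    d1 F p = Dex x y F p * d1 x p + Dey x y F p * d1 y p := by
  simp only [Dex, Dey, dep]
  field_simp
  simp only [Jac]
  ring

theorem d2_eq_Dex_mul_add_Dey_mul (hJ : Jac x y p ≠ 0) (F : ℝ × ℝ × ℝ → ℝ) :
    d2 F p = Dex x y F p * d2 x p + Dey x y F p * d2 y p := by
  simp only [Dex, Dey, dep]
  field_simp
  simp only [Jac]
  ring

theorem differentiableAt_dep (hx : ContDiff ℝ 2 x) (hy : ContDiff ℝ 2 y) (hJ : Jac x y p ≠ 0) :
    DifferentiableAt ℝ (dep x y) p := by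
  have hxv := hx.differentiable_fderiv_apply
  have hyv := hy.differentiable_fderiv_apply
  unfold dep
  unfold Jac d1 d2 at hJ ⊢
  fun_prop (disch := exact hJ)

end ShallowWater

open scoped ContDiff in
/-- Conservation laws from the particle relabelling symmetry: on solutions of the
shallow water equations, `ν̇¹ + ν³_{,1} = 0` and `ν̇² + ν³_{,2} = 0`. -/
theorem stmt_10 (x y : ℝ × ℝ × ℝ → ℝ) (hx : ContDiff ℝ ∞ x) (hy : ContDiff ℝ ∞ y)
    (f g : ℝ) (hJ : ∀ p, Jac x y p ≠ 0)
    (hEx : ∀ p, -(dt (fun q => dt x q) p) + f * dt y p - g * Dex x y (dep x y) p = 0)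
    (hEy : ∀ p, -(dt (fun q => dt y q) p) - f * dt x p - g * Dey x y (dep x y) p = 0)
    (p : ℝ × ℝ × ℝ) :
    dt (nu1 x y f) p + d1 (nu3 x y f g) p = 0 ∧
    dt (nu2 x y f) p + d2 (nu3 x y f g) p = 0 := by
  have hx2 : ContDiff ℝ 2 x := hx.of_le (WithTop.coe_le_coe.2 le_top)
  have hy2 : ContDiff ℝ 2 y := hy.of_le (WithTop.coe_le_coe.2 le_top)
  have hh := differentiableAt_dep hx2 hy2 (hJ p)
  have hxtt : dt (fun q => dt x q) p - f * dt y p = -(g * Dex x y (dep x y) p) := by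
    linarith [hEx p]
  have hytt : dt (fun q => dt y q) p + f * dt x p = -(g * Dey x y (dep x y) p) := by
    linarith [hEy p]
  exact ⟨relabelling_conservation_law hx2 hy2 hh hxtt hytt (d1_eq_Dex_mul_add_Dey_mul (hJ p) _),
    relabelling_conservation_law hx2 hy2 hh hxtt hytt (d2_eq_Dex_mul_add_Dey_mul (hJ p) _)⟩

end
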